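/- Let R and S be (unital, associative) rings such that R ⊗_ℤ S = 0 as abelian groups, and let r = char R and s = char S. Then (r,s) ≠ (0,0); moreover, if r ≠ 0 then the image of r in S is invertible. -/

import Mathlib

/-!
A `ℤ`-bilinear map `R × S → K` taking `(1, 1)` to a nonzero value shows `1 ⊗ 1 ≠ 0`; it can be
built as `(a, b) ↦ f a * g b` from additive maps `f : R →+ K`, `g : S →+ K` with `f 1, g 1 ≠ 0`.
If both characteristics vanish, `1` has infinite order in `R` and `S`, and such maps to `K = ℚ`
exist because `ℚ` is an injective abelian group. If `r ≠ 0`, every prime `p ∣ r` is a non-unit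
in `R`; were it also a non-unit in `S`, then `1 ∉ pR` and `1 ∉ pS`, and linear functionals on the
`𝔽_p`-vector spaces `R/pR` and `S/pS` give such maps to `K = 𝔽_p`. So every prime factor of `r`,
hence `r` itself, is a unit in `S`.
-/

open TensorProduct

theorem TensorProduct.tmul_ne_zero_of_mul_ne_zero {A B K : Type*} [AddCommGroup A]
    [AddCommGroup B] [NonUnitalNonAssocRing K] (f : A →+ K) (g : B →+ K) {x : A} {y : B}
    (h : f x * g y ≠ 0) : x ⊗ₜ[ℤ] y ≠ 0 := by
  intro hxy
  apply h
  simpa using congrArg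
    (lift ((LinearMap.mul ℤ K).compl₁₂ f.toIntLinearMap g.toIntLinearMap)) hxy

theorem exists_addMonoidHom_rat_eq_one (R : Type*) [AddCommGroupWithOne R] [CharZero R] :
    ∃ f : R →+ ℚ, f 1 = 1 := by
  obtain ⟨f, hf⟩ := (Module.Baer.of_divisible ℚ).extension_property_addMonoidHom
    (Int.castAddHom R) Int.cast_injective (Int.castAddHom ℚ)
  exact ⟨f, by simpa using DFunLike.congr_fun hf 1⟩

theorem exists_addMonoidHom_zmod_ne_zero {A : Type*} [AddCommGroup A] (p : ℕ) [Fact p.Prime]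
    {x : A} (hx : ∀ y : A, p • y ≠ x) : ∃ f : A →+ ZMod p, f x ≠ 0 := by
  have hx' : ModN.mkQ p x ≠ 0 := by
    simpa [ModN.mkQ, Submodule.Quotient.mk_eq_zero] using hx
  obtain ⟨f, hf⟩ := Module.Projective.exists_dual_ne_zero (ZMod p) hx'
  exact ⟨f.toAddMonoidHom.comp (ModN.mkQ p), hf⟩

theorem isUnit_natCast_iff_exists_nsmul_eq_one {S : Type*} [Semiring S] {n : ℕ} :
    IsUnit (n : S) ↔ ∃ y : S, n • y = 1 := by
  simp only [nsmul_eq_mul]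
  refine ⟨IsUnit.exists_right_inv, fun ⟨y, hy⟩ => ?_⟩
  exact ((Nat.cast_commute n y).isUnit_mul_iff.mp (hy ▸ isUnit_one)).1

theorem isUnit_natCast_of_forall_prime_dvd {S : Type*} [Semiring S] {n : ℕ} (hn : n ≠ 0)
    (h : ∀ p, p.Prime → p ∣ n → IsUnit (p : S)) : IsUnit (n : S) := by
  induction n using induction_on_primes with
  | zero => exact absurd rfl hn
  | one => simp
  | prime_mul p a hp ih =>
    rw [Nat.cast_mul]
    exact (h p hp (dvd_mul_right p a)).mul
      (ih (right_ne_zero_of_mul hn) fun q hq hqa => h q hq (hqa.mul_left p))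

theorem eq_one_of_isUnit_natCast_of_dvd_ringChar {R : Type*} [Ring R] (hR : ringChar R ≠ 0)
    {d : ℕ} (hd : d ∣ ringChar R) (hu : IsUnit (d : R)) : d = 1 := by
  obtain ⟨m, hm⟩ := hd
  have hm0 : (m : R) = 0 := by
    obtain ⟨u, hu⟩ := hu
    calc (m : R) = u⁻¹ * (d * m : ℕ) := by rw [Nat.cast_mul, ← hu, Units.inv_mul_cancel_left]
      _ = 0 := by rw [← hm, ringChar.Nat.cast_ringChar, mul_zero]
  have hm_pos : 0 < m := Nat.pos_of_ne_zero (right_ne_zero_of_mul (hm ▸ hR))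
  have hle : d * m ≤ 1 * m := by simpa [← hm] using Nat.le_of_dvd hm_pos (ringChar.dvd hm0)
  have hd0 : d ≠ 0 := left_ne_zero_of_mul (hm ▸ hR)
  have := Nat.le_of_mul_le_mul_right hle hm_pos
  omega

theorem exists_addMonoidHom_zmod_map_one_ne_zero {R : Type*} [Ring R] {p : ℕ} [Fact p.Prime]
    (hp : ¬IsUnit (p : R)) : ∃ f : R →+ ZMod p, f 1 ≠ 0 :=
  exists_addMonoidHom_zmod_ne_zero p fun y hy =>
    hp (isUnit_natCast_iff_exists_nsmul_eq_one.mpr ⟨y, hy⟩)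

namespace TensorProduct

theorem one_tmul_one_ne_zero_of_charZero (R S : Type*) [Ring R] [Ring S]
    [CharZero R] [CharZero S] : (1 : R) ⊗ₜ[ℤ] (1 : S) ≠ 0 := by
  obtain ⟨f, hf⟩ := exists_addMonoidHom_rat_eq_one R
  obtain ⟨g, hg⟩ := exists_addMonoidHom_rat_eq_one S
  exact tmul_ne_zero_of_mul_ne_zero f g (by simp [hf, hg])

theorem one_tmul_one_ne_zero_of_not_isUnit {R S : Type*} [Ring R] [Ring S]
    {p : ℕ} (hp : p.Prime) (hR : ¬IsUnit (p : R)) (hS : ¬IsUnit (p : S)) :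
    (1 : R) ⊗ₜ[ℤ] (1 : S) ≠ 0 := by
  have := Fact.mk hp
  obtain ⟨f, hf⟩ := exists_addMonoidHom_zmod_map_one_ne_zero hR
  obtain ⟨g, hg⟩ := exists_addMonoidHom_zmod_map_one_ne_zero hS
  exact tmul_ne_zero_of_mul_ne_zero f g (mul_ne_zero hf hg)

end TensorProduct

/-- Let `R` and `S` be rings such that `R ⊗_ℤ S = 0` (as abelian groups), and let
`r = char R` and `s = char S`. Then `(r, s) ≠ (0, 0)`; moreover, if `r ≠ 0`, then
the image of `r` in `S` is invertible. -/
theorem char_of_tensor_eq_zero (R S : Type) [Ring R] [Ring S]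
    (h : Subsingleton (TensorProduct ℤ R S)) :
    (ringChar R, ringChar S) ≠ (0, 0) ∧
      (ringChar R ≠ 0 → IsUnit ((ringChar R : ℕ) : S)) := by
  have h11 : (1 : R) ⊗ₜ[ℤ] (1 : S) = 0 := Subsingleton.elim _ _
  constructor
  · intro hchar
    have := (CharP.ringChar_zero_iff_CharZero R).mp (congrArg Prod.fst hchar)
    have := (CharP.ringChar_zero_iff_CharZero S).mp (congrArg Prod.snd hchar)
    exact TensorProduct.one_tmul_one_ne_zero_of_charZero R S h11
  · intro hR
    refine isUnit_natCast_of_forall_prime_dvd hR fun p hp hpR => ?_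
    by_contra hS
    have hpR' : ¬IsUnit (p : R) := fun hu =>
      hp.ne_one (eq_one_of_isUnit_natCast_of_dvd_ringChar hR hpR hu)
    exact TensorProduct.one_tmul_one_ne_zero_of_not_isUnit hp hpR' hS h11
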